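/- arXiv:2402.07137 — 3 statements merged into one kernel-verified Lean document; each statement's English description precedes it below -/
import Mathlib

section
/- Let p be a polynomial of degree at least 2. Then Σp contains no nontrivial translation, and there exists a point ξ(p) ∈ ℂ such that every element of Σp is a rotation about ξ(p); that is, every σ ∈ Σp has the form σ(z) = a(z − ξ(p)) + ξ(p) for some a with |a| = 1. -/
open Polynomial OnePoint

noncomputable section

/-- The Riemann sphere, modelled as the one-point compactification of `ℂ`. -/
abbrev RSphere : Type := OnePoint ℂ

/-- The finite part of a point of the Riemann sphere (junk value `0` at `∞`). -/
def toFin : RSphere → ℂ := fun x => match x with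
  | (∞ : RSphere) => 0
  | (z : ℂ) => z

/-- The chordal distance on the Riemann sphere. -/
def chordalDist : RSphere → RSphere → ℝ := fun x y =>
  match x, y with
  | (∞ : RSphere), (∞ : RSphere) => 0
  | (∞ : RSphere), (w : ℂ) => 2 / Real.sqrt (1 + ‖w‖ ^ 2)
  | (z : ℂ), (∞ : RSphere) => 2 / Real.sqrt (1 + ‖z‖ ^ 2)
  | (z : ℂ), (w : ℂ) =>
      2 * ‖z - w‖ /
        (Real.sqrt (1 + ‖z‖ ^ 2) * Real.sqrt (1 + ‖w‖ ^ 2))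

/-- The Fatou set of a self-map of the Riemann sphere: the set of points at which the
family of iterates is equicontinuous with respect to the chordal metric.  It is the largest
open set on which the iterates are equicontinuous. -/
def FatouSet (R : RSphere → RSphere) : Set RSphere :=
  {x | ∀ ε : ℝ, 0 < ε → ∃ V ∈ nhds x, ∀ y ∈ V, ∀ n : ℕ, chordalDist (R^[n] x) (R^[n] y) < ε}

/-- The Julia set: the complement of the Fatou set. -/
def JuliaSet (R : RSphere → RSphere) : Set RSphere :=
  (FatouSet R)ᶜ

/-- A polynomial regarded as a self-map of the Riemann sphere fixing `∞`. -/
def polySphere (p : Polynomial ℂ) : RSphere → RSphere := fun x =>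
  match x with
  | (∞ : RSphere) => ∞
  | (z : ℂ) => ((p.eval z : ℂ) : RSphere)

/-- The affine map `z ↦ a z + b` extended to the Riemann sphere by `∞ ↦ ∞`. -/
def affineSphere (a b : ℂ) : RSphere → RSphere := fun x =>
  match x with
  | (∞ : RSphere) => ∞
  | (z : ℂ) => ((a * z + b : ℂ) : RSphere)

/-- The rational map `P/Q` as a self-map of the Riemann sphere (intended for a
representation `P/Q` in lowest terms). -/
def ratSphere (P Q : Polynomial ℂ) : RSphere → RSphere := fun x =>
  match x with
  | (∞ : RSphere) =>
      if P.natDegree > Q.natDegree then ∞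
      else ((P.leadingCoeff / Q.leadingCoeff : ℂ) : RSphere)
  | (z : ℂ) =>
      if Q.eval z = 0 then ∞ else ((P.eval z / Q.eval z : ℂ) : RSphere)

/-- The Möbius transformation `z ↦ (az+b)/(cz+d)` as a self-map of the Riemann sphere
(intended for `ad - bc ≠ 0`). -/
def mobiusSphere (a b c d : ℂ) : RSphere → RSphere := fun x =>
  match x with
  | (∞ : RSphere) => if c = 0 then ∞ else ((a / c : ℂ) : RSphere)
  | (z : ℂ) => if c * z + d = 0 then ∞ else (((a * z + b) / (c * z + d) : ℂ) : RSphere)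

/-- The inversion `z ↦ 1/z` on the Riemann sphere. -/
def invSphere : RSphere → RSphere := fun x =>
  match x with
  | (∞ : RSphere) => ((0 : ℂ) : RSphere)
  | (z : ℂ) => if z = 0 then ∞ else ((z⁻¹ : ℂ) : RSphere)

/-- `Σ R`: the group of rotations `z ↦ az + b` (`|a| = 1`, `a ≠ 1`, extended by `∞ ↦ ∞`)
preserving the Julia set of `R`, together with the identity. -/
def SigmaGroup (R : RSphere → RSphere) : Set (RSphere → RSphere) :=
  {σ | σ = id ∨ ∃ a b : ℂ, ‖a‖ = 1 ∧ a ≠ 1 ∧ σ = affineSphere a b ∧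
        affineSphere a b '' JuliaSet R = JuliaSet R}

/-- `U` is a Fatou component of `R`: a connected component of the Fatou set. -/
def IsFatouComponent (R : RSphere → RSphere) (U : Set RSphere) : Prop :=
  U.Nonempty ∧ IsOpen U ∧ IsPreconnected U ∧ U ⊆ FatouSet R ∧
    ∀ V : Set RSphere, IsPreconnected V → V ⊆ FatouSet R → U ⊆ V → V = U

/-- The multiplier of `R^[k]` at a fixed point `x` of `R^[k]` equals `lam`
(using the chart `w ↦ 1/w` at `∞`). -/
def MultiplierEq (R : RSphere → RSphere) (k : ℕ) (x : RSphere) (lam : ℂ) : Prop :=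
  (∃ z₀ : ℂ, x = (z₀ : RSphere) ∧ HasDerivAt (fun z : ℂ => toFin (R^[k] (z : RSphere))) lam z₀) ∨
  (x = (∞ : RSphere) ∧
    HasDerivAt (fun w : ℂ => toFin (invSphere (R^[k] (invSphere (w : RSphere))))) lam 0)

/-- `R` has a parabolic domain: a `k`-periodic Fatou component whose boundary contains a
`k`-periodic point whose multiplier is a root of unity. -/
def HasParabolicDomain (R : RSphere → RSphere) : Prop :=
  ∃ (U : Set RSphere) (k : ℕ), 0 < k ∧ IsFatouComponent R U ∧ R^[k] '' U ⊆ U ∧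
    ∃ x ∈ frontier U, R^[k] x = x ∧
      ∃ lam : ℂ, (∃ m : ℕ, 0 < m ∧ lam ^ m = 1) ∧ MultiplierEq R k x lam

/-- `R` has a rotation domain (Siegel disc or Herman ring): a `k`-periodic Fatou component
on which `R^[k]` is a bijection. -/
def HasRotationDomain (R : RSphere → RSphere) : Prop :=
  ∃ (U : Set RSphere) (k : ℕ), 0 < k ∧ IsFatouComponent R U ∧ Set.BijOn (R^[k]) U U

/-- A rational map is exceptional if its Julia set is the whole sphere, a circle in the
sphere, or a closed arc of such a circle (circles in the sphere being Möbius images of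
the unit circle). -/
def ExceptionalMap (R : RSphere → RSphere) : Prop :=
  JuliaSet R = Set.univ ∨
    ∃ a b c d : ℂ, a * d - b * c ≠ 0 ∧ ∃ θ₁ θ₂ : ℝ,
      JuliaSet R =
        mobiusSphere a b c d ''
          ((fun θ : ℝ => ((Complex.exp (θ * Complex.I) : ℂ) : RSphere)) '' Set.Icc θ₁ θ₂)

/-- `L_p(z) = p(z)p''(z)/p'(z)²`. -/
def Lfun (p : Polynomial ℂ) (z : ℂ) : ℂ :=
  p.eval z * (derivative (derivative p)).eval z / (p.derivative.eval z) ^ 2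

/-- The Chebyshev method `C_p(z) = z - (1 + L_p(z)/2) p(z)/p'(z)` (as a map on `ℂ`). -/
def Cfun (p : Polynomial ℂ) (z : ℂ) : ℂ :=
  z - (1 + Lfun p z / 2) * (p.eval z / p.derivative.eval z)

/-- The Chebyshev method of `p` as a rational self-map of the Riemann sphere:
`C_p = (2 z p'³ - 2 p p'² - p² p'') / (2 p'³)`. -/
def ChebSphere (p : Polynomial ℂ) : RSphere → RSphere :=
  ratSphere (C 2 * X * (derivative p) ^ 3 - C 2 * p * (derivative p) ^ 2
      - p ^ 2 * derivative (derivative p))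
    (C 2 * (derivative p) ^ 3)

/-!
Since `p` has degree at least two, `‖p z‖ ≥ 2‖z‖` outside some disc of radius `R`; there the
iterates tend to `∞` uniformly, so every point with `‖z‖ > R` is in the Fatou set. On the other
hand, the boundary of the filled Julia set `{z | ∀ n, ‖pⁿ z‖ ≤ R}` (nonempty, as it contains a
fixed point of `p`) lies in the Julia set. Thus `J(p)` meets `ℂ` in a nonempty bounded set, so no
translation `z ↦ z + b`, `b ≠ 0`, preserves it. Consequently an affine symmetry `z ↦ az + b` of
`J(p)` is determined by `a`; comparing `σ ∘ σ₀` with `σ₀ ∘ σ` for a fixed symmetry `σ₀` with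
`a₀ ≠ 1` shows that every symmetry fixes the fixed point `ξ` of `σ₀`.
-/

open Filter Topology

lemma one_le_sqrt_one_add_sq (a : ℝ) : 1 ≤ √(1 + a ^ 2) :=
  Real.one_le_sqrt.mpr (by nlinarith)

lemma le_sqrt_one_add_sq (a : ℝ) : a ≤ √(1 + a ^ 2) :=
  Real.le_sqrt_of_sq_le (by nlinarith)

lemma sqrt_one_add_sq_le {a : ℝ} (ha : 0 ≤ a) : √(1 + a ^ 2) ≤ 1 + a :=
  Real.sqrt_le_iff.mpr ⟨by positivity, by nlinarith⟩

lemma chordalDist_coe_coe (z w : ℂ) : chordalDist z w =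
    2 * ‖z - w‖ / (√(1 + ‖z‖ ^ 2) * √(1 + ‖w‖ ^ 2)) := rfl

lemma chordalDist_coe_le_two_mul_norm_sub (z w : ℂ) : chordalDist z w ≤ 2 * ‖z - w‖ := by
  rw [chordalDist_coe_coe]
  refine div_le_self (by positivity) ?_
  nlinarith [one_le_sqrt_one_add_sq ‖z‖, one_le_sqrt_one_add_sq ‖w‖]

lemma chordalDist_coe_lt_of_lt_norm {ε : ℝ} (hε : 0 < ε) {z w : ℂ} (hz : 4 / ε < ‖z‖)
    (hw : 4 / ε < ‖w‖) : chordalDist z w < ε := by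
  rw [chordalDist_coe_coe]
  set A := √(1 + ‖z‖ ^ 2)
  set B := √(1 + ‖w‖ ^ 2)
  have hzA : ‖z‖ ≤ A := le_sqrt_one_add_sq _
  have hwB : ‖w‖ ≤ B := le_sqrt_one_add_sq _
  have hA0 : 0 < A := one_pos.trans_le (one_le_sqrt_one_add_sq _)
  have hB0 : 0 < B := one_pos.trans_le (one_le_sqrt_one_add_sq _)
  have hz0 : 0 < ‖z‖ := (div_pos four_pos hε).trans hz
  have hw0 : 0 < ‖w‖ := (div_pos four_pos hε).trans hw
  have hzε : 2 / ‖z‖ < ε / 2 := by rw [div_lt_iff₀ hz0]; rw [div_lt_iff₀ hε] at hz; linarith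
  have hwε : 2 / ‖w‖ < ε / 2 := by rw [div_lt_iff₀ hw0]; rw [div_lt_iff₀ hε] at hw; linarith
  calc 2 * ‖z - w‖ / (A * B) ≤ 2 * (‖z‖ + ‖w‖) / (A * B) := by gcongr; exact norm_sub_le z w
    _ = 2 * ‖z‖ / A / B + 2 * ‖w‖ / B / A := by field_simp
    _ ≤ 2 * A / A / ‖w‖ + 2 * B / B / ‖z‖ := by gcongr
    _ = 2 / ‖w‖ + 2 / ‖z‖ := by field_simp
    _ < ε := by linarith

lemma div_le_chordalDist_coe {R : ℝ} (hR : 1 ≤ R) {z w : ℂ} (hz : ‖z‖ ≤ R)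
    (hw : 2 * R ≤ ‖w‖) : 1 / (2 * (1 + R)) ≤ chordalDist z w := by
  rw [chordalDist_coe_coe]
  have hA : √(1 + ‖z‖ ^ 2) ≤ 1 + R := (sqrt_one_add_sq_le (norm_nonneg z)).trans (by linarith)
  have hB : √(1 + ‖w‖ ^ 2) ≤ 2 * ‖w‖ := (sqrt_one_add_sq_le (norm_nonneg w)).trans (by linarith)
  have hw0 : 0 < ‖w‖ := by linarith
  have hzw : ‖w‖ / 2 ≤ ‖z - w‖ := by
    have := norm_sub_norm_le w z
    rw [norm_sub_rev] at this
    linarith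
  calc 1 / (2 * (1 + R)) = 2 * (‖w‖ / 2) / ((1 + R) * (2 * ‖w‖)) := by field_simp
    _ ≤ 2 * ‖z - w‖ / (√(1 + ‖z‖ ^ 2) * √(1 + ‖w‖ ^ 2)) := by gcongr

lemma exists_two_mul_norm_le_norm_eval {p : ℂ[X]} (hdeg : 2 ≤ p.natDegree) :
    ∃ R : ℝ, 1 ≤ R ∧ ∀ z : ℂ, R ≤ ‖z‖ → 2 * ‖z‖ ≤ ‖p.eval z‖ := by
  have hq : 0 < p.divX.degree := by
    rw [← natDegree_pos_iff_degree_pos, natDegree_divX_eq_natDegree_tsub_one]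
    omega
  have hlarge : ∀ᶠ z in Bornology.cobounded ℂ,
      3 ≤ ‖p.divX.eval z‖ ∧ max 1 ‖p.coeff 0‖ ≤ ‖z‖ :=
    ((p.divX.tendsto_norm_atTop hq tendsto_norm_cobounded_atTop).eventually_ge_atTop 3).and
      (eventually_cobounded_le_norm _)
  obtain ⟨R, -, hR⟩ := hasBasis_cobounded_norm.eventually_iff.mp hlarge
  refine ⟨max R 1, le_max_right _ _, fun z hz => ?_⟩
  obtain ⟨hq3, hc⟩ := hR (le_of_max_le_left hz)
  have hsplit : p.eval z = p.divX.eval z * z + p.coeff 0 := by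
    conv_lhs => rw [← divX_mul_X_add p]
    simp
  calc 2 * ‖z‖ ≤ ‖p.divX.eval z * z‖ - ‖-p.coeff 0‖ := by
        rw [norm_mul, norm_neg]; nlinarith [le_of_max_le_right hc, norm_nonneg z]
    _ ≤ ‖p.eval z‖ := by rw [hsplit, ← sub_neg_eq_add]; exact norm_sub_norm_le _ _

lemma exists_eval_eq_self {p : ℂ[X]} (hdeg : 2 ≤ p.natDegree) : ∃ α : ℂ, p.eval α = α := by
  have hdeg' : (p - X).natDegree = p.natDegree :=
    natDegree_sub_eq_left_of_natDegree_lt (by rw [natDegree_X]; omega)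
  obtain ⟨α, hα⟩ := Complex.exists_root (f := p - X) (by
    rw [← natDegree_pos_iff_degree_pos, hdeg']; omega)
  exact ⟨α, by simpa [sub_eq_zero] using hα⟩

lemma norm_iterate_ge_of_expanding {E : Type*} [SeminormedAddCommGroup E] {f : E → E} {R : ℝ}
    (hR0 : 0 ≤ R) (hR : ∀ z, R ≤ ‖z‖ → 2 * ‖z‖ ≤ ‖f z‖) {z : E} (hz : R ≤ ‖z‖) (n : ℕ) :
    2 ^ n * ‖z‖ ≤ ‖f^[n] z‖ := by
  induction n with
  | zero => simp
  | succ n ih =>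
    rw [Function.iterate_succ_apply', pow_succ']
    have : R ≤ ‖f^[n] z‖ := by nlinarith [one_le_pow₀ (M₀ := ℝ) one_le_two (n := n)]
    linarith [hR _ this]

section PolynomialDynamics

variable {p : ℂ[X]} {R : ℝ}

lemma polySphere_iterate_coe (p : ℂ[X]) (n : ℕ) (z : ℂ) :
    (polySphere p)^[n] z = ((p.eval^[n] z : ℂ) : RSphere) := by
  induction n with
  | zero => rfl
  | succ n ih => rw [Function.iterate_succ_apply', Function.iterate_succ_apply', ih]; rfl

lemma coe_mem_fatouSet_of_lt_norm (hR0 : 0 < R) (hR : ∀ z : ℂ, R ≤ ‖z‖ → 2 * ‖z‖ ≤ ‖p.eval z‖)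
    {z : ℂ} (hz : R < ‖z‖) : (z : RSphere) ∈ FatouSet (polySphere p) := by
  intro ε hε
  obtain ⟨N, hN⟩ := pow_unbounded_of_one_lt (4 / ε / R) one_lt_two
  have hNε : 4 / ε < 2 ^ N * R := by rwa [div_lt_iff₀ hR0] at hN
  have hnear : ∀ᶠ y in 𝓝 z, R < ‖y‖ ∧ ∀ n < N, dist (p.eval^[n] y) (p.eval^[n] z) < ε / 2 :=
    (continuousAt_const.eventually_lt continuous_norm.continuousAt hz).and <|
      (Set.finite_lt_nat N).eventually_all.mpr fun n _ =>
        (p.continuous.iterate n).continuousAt.eventually (Metric.ball_mem_nhds _ (half_pos hε))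
  refine ⟨(↑) '' {y | R < ‖y‖ ∧ ∀ n < N, dist (p.eval^[n] y) (p.eval^[n] z) < ε / 2},
    by rw [OnePoint.nhds_coe_eq]; exact image_mem_map hnear, ?_⟩
  rintro _ ⟨y, ⟨hyR, hyN⟩, rfl⟩ n
  rw [polySphere_iterate_coe, polySphere_iterate_coe]
  rcases lt_or_ge n N with hn | hn
  · calc chordalDist _ _ ≤ 2 * ‖p.eval^[n] z - p.eval^[n] y‖ :=
          chordalDist_coe_le_two_mul_norm_sub _ _
      _ < ε := by rw [← dist_eq_norm, dist_comm]; linarith [hyN n hn]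
  · have hgrow : ∀ x : ℂ, R ≤ ‖x‖ → 4 / ε < ‖p.eval^[n] x‖ := fun x hx =>
      calc 4 / ε < 2 ^ N * R := hNε
        _ ≤ 2 ^ n * ‖x‖ := by gcongr; exact one_le_two
        _ ≤ ‖p.eval^[n] x‖ := norm_iterate_ge_of_expanding hR0.le hR hx n
    exact chordalDist_coe_lt_of_lt_norm hε (hgrow z hz.le) (hgrow y hyR.le)

lemma norm_le_of_coe_mem_juliaSet (hR0 : 0 < R)
    (hR : ∀ z : ℂ, R ≤ ‖z‖ → 2 * ‖z‖ ≤ ‖p.eval z‖) {z : ℂ}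
    (hz : (z : RSphere) ∈ JuliaSet (polySphere p)) : ‖z‖ ≤ R :=
  not_lt.mp fun h => hz (coe_mem_fatouSet_of_lt_norm hR0 hR h)

lemma coe_mem_juliaSet_of_mem_frontier (hR1 : 1 ≤ R)
    (hR : ∀ z : ℂ, R ≤ ‖z‖ → 2 * ‖z‖ ≤ ‖p.eval z‖) {z₀ : ℂ}
    (hz₀ : z₀ ∈ frontier {z : ℂ | ∀ n, ‖p.eval^[n] z‖ ≤ R}) :
    (z₀ : RSphere) ∈ JuliaSet (polySphere p) := by
  have hclosed : IsClosed {z : ℂ | ∀ n, ‖p.eval^[n] z‖ ≤ R} := by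
    simp only [Set.ofPred_forall]
    exact isClosed_iInter fun n =>
      isClosed_le (continuous_norm.comp (p.continuous.iterate n)) continuous_const
  have hz₀K := hclosed.frontier_subset hz₀
  intro hF
  obtain ⟨V, hV, hVε⟩ := hF (1 / (2 * (1 + R))) (by positivity)
  rw [OnePoint.nhds_coe_eq, mem_map] at hV
  obtain ⟨y, hyV, hyK⟩ : ∃ y ∈ (↑) ⁻¹' V, ¬ ∀ n, ‖p.eval^[n] y‖ ≤ R :=
    Set.not_subset.mp fun hsub => hz₀.2 (mem_interior_iff_mem_nhds.mpr (mem_of_superset hV hsub))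
  push Not at hyK
  obtain ⟨n, hn⟩ := hyK
  have hesc : 2 * R ≤ ‖p.eval^[n + 1] y‖ := by
    rw [Function.iterate_succ_apply']
    linarith [hR _ hn.le]
  have hclose := hVε y hyV (n + 1)
  rw [polySphere_iterate_coe, polySphere_iterate_coe] at hclose
  linarith [div_le_chordalDist_coe hR1 (hz₀K (n + 1)) hesc]

lemma exists_coe_mem_juliaSet (hdeg : 2 ≤ p.natDegree) (hR1 : 1 ≤ R)
    (hR : ∀ z : ℂ, R ≤ ‖z‖ → 2 * ‖z‖ ≤ ‖p.eval z‖) :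
    ∃ z₀ : ℂ, (z₀ : RSphere) ∈ JuliaSet (polySphere p) := by
  obtain ⟨α, hα⟩ := exists_eval_eq_self hdeg
  have hαR : ‖α‖ ≤ R := not_lt.mp fun h => by
    have := hR α h.le
    rw [hα] at this
    linarith [norm_nonneg α]
  have hfrontier : (frontier {z : ℂ | ∀ n, ‖p.eval^[n] z‖ ≤ R}).Nonempty := by
    refine nonempty_frontier_iff.mpr ⟨⟨α, fun n => ?_⟩, fun h => ?_⟩
    · rwa [Function.iterate_fixed hα]
    · have := (h ▸ Set.mem_univ ((R + 1 : ℝ) : ℂ) :) 0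
      simp only [Function.iterate_zero, id_eq, Complex.norm_real, Real.norm_eq_abs] at this
      linarith [le_abs_self (R + 1)]
  obtain ⟨z₀, hz₀⟩ := hfrontier
  exact ⟨z₀, coe_mem_juliaSet_of_mem_frontier hR1 hR hz₀⟩

end PolynomialDynamics

section AffineSymmetry

variable {S : Set RSphere}

lemma affineSphere_comp (a b c d : ℂ) :
    affineSphere a b ∘ affineSphere c d = affineSphere (a * c) (a * d + b) := by
  funext x
  induction x using OnePoint.rec with
  | infty => rfl
  | coe z => exact congrArg ((↑) : ℂ → RSphere) (by ring)

lemma affineSphere_one_zero : affineSphere 1 0 = id := by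
  funext x
  induction x using OnePoint.rec with
  | infty => rfl
  | coe z => exact congrArg ((↑) : ℂ → RSphere) (by ring)

lemma image_affineSphere_comp_eq {a b c d : ℂ} (h₁ : affineSphere a b '' S = S)
    (h₂ : affineSphere c d '' S = S) : affineSphere (a * c) (a * d + b) '' S = S := by
  rw [← affineSphere_comp, Set.image_comp, h₂, h₁]

lemma image_affineSphere_inv_eq {a b : ℂ} (ha : a ≠ 0) (h : affineSphere a b '' S = S) :
    affineSphere a⁻¹ (-(a⁻¹ * b)) '' S = S := by
  conv_lhs => rw [← h, ← Set.image_comp, affineSphere_comp, inv_mul_cancel₀ ha, add_neg_cancel,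
    affineSphere_one_zero, Set.image_id]

lemma image_affineSphere_one_ne_of_bounded {R : ℝ} {z₀ : ℂ} (hz₀ : (z₀ : RSphere) ∈ S)
    (hS : ∀ z : ℂ, (z : RSphere) ∈ S → ‖z‖ ≤ R) {b : ℂ} (hb : b ≠ 0) :
    affineSphere 1 b '' S ≠ S := by
  intro h
  have horbit : ∀ n : ℕ, ((z₀ + n * b : ℂ) : RSphere) ∈ S := by
    intro n
    induction n with
    | zero => simpa using hz₀
    | succ n ih =>
      rw [← h]
      exact ⟨_, ih, congrArg ((↑) : ℂ → RSphere) (by push_cast; ring)⟩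
  obtain ⟨n, hn⟩ := exists_nat_gt ((R + ‖z₀‖) / ‖b‖)
  rw [div_lt_iff₀ (norm_pos_iff.mpr hb)] at hn
  have hfar : n * ‖b‖ - ‖z₀‖ ≤ ‖z₀ + n * b‖ := by
    simpa [add_comm, norm_mul] using norm_sub_norm_le ((n : ℂ) * b) (-z₀)
  linarith [hS _ (horbit n)]

lemma eq_of_image_affineSphere_eq (hS : ∀ b : ℂ, b ≠ 0 → affineSphere 1 b '' S ≠ S) {a b b' : ℂ}
    (ha : a ≠ 0) (h : affineSphere a b '' S = S) (h' : affineSphere a b' '' S = S) : b = b' := by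
  have htrans := image_affineSphere_comp_eq (image_affineSphere_inv_eq ha h') h
  rw [inv_mul_cancel₀ ha] at htrans
  by_contra hne
  refine hS _ ?_ htrans
  rw [← sub_eq_add_neg, ← mul_sub]
  exact mul_ne_zero (inv_ne_zero ha) (sub_ne_zero.mpr hne)

lemma exists_center_of_forall_image_affineSphere_one_ne
    (hS : ∀ b : ℂ, b ≠ 0 → affineSphere 1 b '' S ≠ S) :
    ∃ ξ : ℂ, ∀ a b : ℂ, a ≠ 0 → affineSphere a b '' S = S → b = ξ * (1 - a) := by
  by_cases hrot : ∃ a₀ b₀ : ℂ, a₀ ≠ 0 ∧ a₀ ≠ 1 ∧ affineSphere a₀ b₀ '' S = S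
  · obtain ⟨a₀, b₀, ha₀, ha₀1, h₀⟩ := hrot
    refine ⟨b₀ / (1 - a₀), fun a b ha h => ?_⟩
    -- `σ ∘ σ₀` and `σ₀ ∘ σ` have the same linear part `a a₀`.
    have hcomm : a * b₀ + b = a₀ * b + b₀ := eq_of_image_affineSphere_eq hS
      (mul_ne_zero ha ha₀) (image_affineSphere_comp_eq h h₀)
      (mul_comm a₀ a ▸ image_affineSphere_comp_eq h₀ h)
    have : (1 : ℂ) - a₀ ≠ 0 := sub_ne_zero.mpr (Ne.symm ha₀1)
    field_simp
    linear_combination hcomm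
  · push Not at hrot
    refine ⟨0, fun a b ha h => ?_⟩
    have ha1 : a = 1 := by_contra fun ha1 => hrot a b ha ha1 h
    subst ha1
    by_contra hb
    exact hS b (by simpa using hb) h

end AffineSymmetry

/-- For every polynomial `p` of degree at least `2`, no nontrivial
translation preserves the Julia set of `p` (so `Σp` contains no nontrivial translation),
and there is a point `ξ(p)` such that every element of `Σp` is a rotation about `ξ(p)`,
i.e. has the form `z ↦ a(z - ξ) + ξ = a z + ξ(1-a)` with `|a| = 1`. -/
theorem sigmaGroup_rotations_about_common_point (p : Polynomial ℂ) (hdeg : 2 ≤ p.natDegree) :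
    (∀ b : ℂ, b ≠ 0 →
      affineSphere 1 b '' JuliaSet (polySphere p) ≠ JuliaSet (polySphere p)) ∧
    ∃ ξ : ℂ, ∀ σ ∈ SigmaGroup (polySphere p),
      ∃ a : ℂ, ‖a‖ = 1 ∧ σ = affineSphere a (ξ * (1 - a)) := by
  obtain ⟨R, hR1, hR⟩ := exists_two_mul_norm_le_norm_eval hdeg
  obtain ⟨z₀, hz₀⟩ := exists_coe_mem_juliaSet hdeg hR1 hR
  have htrans : ∀ b : ℂ, b ≠ 0 →
      affineSphere 1 b '' JuliaSet (polySphere p) ≠ JuliaSet (polySphere p) := fun _ =>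
    image_affineSphere_one_ne_of_bounded hz₀
      (fun _ => norm_le_of_coe_mem_juliaSet (one_pos.trans_le hR1) hR)
  obtain ⟨ξ, hξ⟩ := exists_center_of_forall_image_affineSphere_one_ne htrans
  refine ⟨htrans, ξ, fun σ hσ => ?_⟩
  rcases hσ with rfl | ⟨a, b, ha, -, rfl, h⟩
  · exact ⟨1, norm_one, by rw [sub_self, mul_zero, affineSphere_one_zero]⟩
  · exact ⟨a, ha, by rw [hξ a b (norm_ne_zero_iff.mp (ha ▸ one_ne_zero)) h]⟩

end
end

section
/- Let p(z) = z^α p₀(z^β) be a normalized polynomial of degree at least 2 with α and β maximal for this expression, let λ ∈ ℂ with λ^β = 1 and λ ≠ 1, let σ(z) = λz, and set q = σ∘p∘σ^{-1}, so that q(z) = λ^{1−α} z^α p₀(z^β). Then p∘q = q∘p if and only if λ^{(α−1)²} = 1. -/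
/-!
Since `λ^β = 1`, the rotation `σ(z) = λz` commutes with `z ↦ z^β`, so `q = c p` with
`c = λ^{1-α}`, and `c^β = 1`. A polynomial of the form `z^α r(z^β)` scales by `c^α` when its
argument is scaled by a `β`-th root of unity `c`; hence `p ∘ q = c^α (p ∘ p)` while
`q ∘ p = c (p ∘ p)`. As `p ∘ p ≠ 0`, the two agree iff `c^{α-1} = 1`, that is
`λ^{-(α-1)²} = 1`.
-/

open Polynomial OnePoint

noncomputable section

namespace Polynomial

theorem X_pow_mul_comp_X_pow_comp_C_mul {R : Type*} [CommSemiring R] (α β : ℕ) (r f : R[X])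
    {c : R} (hc : c ^ β = 1) :
    (X ^ α * r.comp (X ^ β)).comp (C c * f) = C (c ^ α) * (X ^ α * r.comp (X ^ β)).comp f := by
  simp only [mul_comp, pow_comp, X_comp, comp_assoc, mul_pow, ← C_pow, hc, C_1, one_mul]
  ring

end Polynomial

theorem zpow_one_sub_pow_eq_self_iff {G₀ : Type*} [GroupWithZero G₀] {a : G₀} (ha : a ≠ 0)
    (n : ℕ) : (a ^ (1 - n : ℤ)) ^ n = a ^ (1 - n : ℤ) ↔ a ^ ((n - 1 : ℤ) ^ 2) = 1 := by
  rw [← zpow_natCast, ← zpow_mul,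
    show (1 - n : ℤ) * n = (1 - n) - (n - 1) ^ 2 by ring, zpow_sub₀ ha,
    div_eq_iff (zpow_ne_zero _ ha), eq_comm, mul_eq_left₀ (zpow_ne_zero _ ha)]

theorem conjugate_commutes_iff_general (p p₀ q : Polynomial ℂ) (α β : ℕ) (hβ : 1 ≤ β)
    (hp : p = X ^ α * p₀.comp (X ^ β))
    (hdeg : 2 ≤ p.natDegree)
    (lam : ℂ) (hlam : lam ^ β = 1)
    (hq : q = C (lam ^ ((1 : ℤ) - (α : ℤ))) * (X ^ α * p₀.comp (X ^ β))) :
    p.comp q = q.comp p ↔ lam ^ (((α : ℤ) - 1) ^ 2) = 1 := by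
  have hlam0 : lam ≠ 0 := by
    rintro rfl
    simp [zero_pow (by omega : β ≠ 0)] at hlam
  set c : ℂ := lam ^ ((1 : ℤ) - (α : ℤ))
  have hc : c ^ β = 1 := by
    rw [← zpow_natCast, ← zpow_mul, mul_comm, zpow_mul, zpow_natCast, hlam, one_zpow]
  have hpp : p.comp p ≠ 0 := by
    refine ne_zero_of_natDegree_gt (n := 0) ?_
    rw [natDegree_comp]
    exact Nat.mul_pos (by omega) (by omega)
  have hqp : q = C c * p := by rw [hq, hp]
  have hpq : p.comp (C c * p) = C (c ^ α) * p.comp p := by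
    simpa only [← hp] using X_pow_mul_comp_X_pow_comp_C_mul α β p₀ p hc
  rw [hqp, hpq, mul_comp, C_comp, (mul_left_injective₀ hpp).eq_iff, C_inj,
    zpow_one_sub_pow_eq_self_iff hlam0]

/-- Let `p(z) = z^α p₀(z^β)` be a normalized polynomial of degree at
least `2` with `α`, `β` maximal, `λ^β = 1`, `λ ≠ 1`, `σ(z) = λz`, and
`q = σ∘p∘σ⁻¹`, so `q(z) = λ^{1-α} z^α p₀(z^β)`.  Then `p∘q = q∘p` iff
`λ^{(α-1)²} = 1`. -/
theorem conjugate_commutes_iff (p p₀ q : Polynomial ℂ) (α β : ℕ) (hβ : 1 ≤ β)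
    (hp : p = X ^ α * p₀.comp (X ^ β))
    (hmono : p₀.Monic) (hconst : p₀.coeff 0 ≠ 0)
    (hgcd : (p₀.support.erase 0).gcd id = 1)
    (hdeg : 2 ≤ p.natDegree) (hmonic : p.Monic) (hcent : p.coeff (p.natDegree - 1) = 0)
    (lam : ℂ) (hlam : lam ^ β = 1) (hlam1 : lam ≠ 1)
    (hq : q = C (lam ^ ((1 : ℤ) - (α : ℤ))) * (X ^ α * p₀.comp (X ^ β)))
    (hconj : ∀ z : ℂ, q.eval (lam * z) = lam * p.eval z) :
    p.comp q = q.comp p ↔ lam ^ (((α : ℤ) - 1) ^ 2) = 1 :=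
  conjugate_commutes_iff_general p p₀ q α β hβ hp hdeg lam hlam hq

end
end

section
/- Let Q₀(z) = z^{n₁} + b₂z^{n₂} + ⋯ + b_r z^{n_r} + b_{r+1} be a polynomial with n₁ > n₂ > ⋯ > n_r > 0, b_i ≠ 0 for i = 2, …, r+1, and gcd(n₁, n₂, …, n_r) = 1. Let β₂ ≥ 1 be an integer and μ ∈ ℂ. If Q₀(μ^{β₂} z^{β₂}) = Q₀(z^{β₂}) for all z ∈ ℂ, then μ^{β₂} = 1. -/
open Polynomial OnePoint

noncomputable section

/-! Put `ν = μ^{β₂}`. As `z ↦ z^{β₂}` is onto `ℂ`, `Q₀(ν w) = Q₀(w)` for all `w`, so comparing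
coefficients gives `ν^k c_k = c_k` for every coefficient `c_k` of `Q₀`. The exponents `n_i` are
distinct, so the coefficient at `n_i` is `1` or `b_i`, nonzero; hence `ν^{n_i} = 1` for all `i`,
and the order of `ν` divides `gcd(n₁, …, n_r) = 1`. -/

theorem eq_one_of_pow_eq_one_of_gcd_eq_one {M ι : Type*} [Monoid M] {s : Finset ι} {n : ι → ℕ}
    {a : M} (h : ∀ i ∈ s, a ^ n i = 1) (hgcd : s.gcd n = 1) : a = 1 := by
  have := Finset.dvd_gcd fun i hi => orderOf_dvd_of_pow_eq_one (h i hi)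
  rwa [hgcd, Nat.dvd_one, orderOf_eq_one_iff] at this

theorem comp_C_mul_X_eq_self_of_eval_mul_pow {K : Type*} [Field K] [IsAlgClosed K] {p : K[X]}
    {a : K} {β : ℕ} (hβ : β ≠ 0) (h : ∀ z, p.eval (a * z ^ β) = p.eval (z ^ β)) :
    p.comp (C a * X) = p := by
  refine Polynomial.funext fun w => ?_
  obtain ⟨z, rfl⟩ := IsAlgClosed.exists_pow_nat_eq w (Nat.pos_of_ne_zero hβ)
  simpa using h z

theorem pow_eq_one_of_comp_C_mul_X_eq_self {R : Type*} [CommRing R] [IsDomain R] {p : R[X]}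
    {a : R} (h : p.comp (C a * X) = p) {k : ℕ} (hk : p.coeff k ≠ 0) : a ^ k = 1 := by
  have := congrArg (coeff · k) h
  simp only [comp_C_mul_X_coeff] at this
  exact (mul_right_eq_self₀.1 this).resolve_right hk

theorem coeff_X_pow_add_sum_add_C {R : Type*} [Semiring R] {n : ℕ → ℕ} {r i : ℕ}
    (hinj : Set.InjOn n (Finset.Icc 1 r)) (b : ℕ → R) (c : R) (hi : i ∈ Finset.Icc 1 r)
    (hni : n i ≠ 0) :
    (X ^ n 1 + ∑ j ∈ Finset.Icc 2 r, C (b j) * X ^ n j + C c).coeff (n i) =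
      if i = 1 then 1 else b i := by
  have hsub : Finset.Icc 2 r ⊆ Finset.Icc 1 r := Finset.Icc_subset_Icc_left one_le_two
  have h1 : (1 : ℕ) ∈ Finset.Icc 1 r := by grind
  have hsum :
      ∑ j ∈ Finset.Icc 2 r, (if n i = n j then b j else 0) = if i = 1 then 0 else b i := by
    rw [Finset.sum_congr rfl fun j hj => if_congr (hinj.eq_iff hi (hsub hj)) rfl rfl,
      Finset.sum_ite_eq]
    split_ifs <;> grind
  simp only [coeff_add, finsetSum_coeff, coeff_X_pow, coeff_C_mul_X_pow, coeff_C, hni,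
    if_false, add_zero, hsum, hinj.eq_iff hi h1]
  split_ifs <;> simp

theorem root_of_unity_of_coeff_comparison_general (r : ℕ) (n : ℕ → ℕ) (b : ℕ → ℂ)
    (hdec : ∀ i j : ℕ, 1 ≤ i → i < j → j ≤ r → n j < n i)
    (hb : ∀ i : ℕ, 2 ≤ i → i ≤ r + 1 → b i ≠ 0)
    (hgcd : (Finset.Icc 1 r).gcd n = 1)
    (Q₀ : Polynomial ℂ)
    (hQ₀ : Q₀ = X ^ (n 1) + ∑ i ∈ Finset.Icc 2 r, C (b i) * X ^ (n i) + C (b (r + 1)))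
    (β₂ : ℕ) (μ : ℂ)
    (heq : ∀ z : ℂ, Q₀.eval (μ ^ β₂ * z ^ β₂) = Q₀.eval (z ^ β₂)) :
    μ ^ β₂ = 1 := by
  subst hQ₀
  rcases Nat.eq_zero_or_pos β₂ with rfl | hβ₂
  · exact pow_zero μ
  have hcomp := comp_C_mul_X_eq_self_of_eval_mul_pow hβ₂.ne' heq
  have hanti : StrictAntiOn n (Set.Icc 1 r) := fun i hi j hj hij => hdec i j hi.1 hij hj.2
  have hinj : Set.InjOn n (Finset.Icc 1 r) := by
    rw [Finset.coe_Icc]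
    exact hanti.injOn
  refine eq_one_of_pow_eq_one_of_gcd_eq_one (fun i hi => ?_) hgcd
  rcases eq_or_ne (n i) 0 with hni | hni
  · rw [hni, pow_zero]
  refine pow_eq_one_of_comp_C_mul_X_eq_self hcomp ?_
  rw [coeff_X_pow_add_sum_add_C hinj b _ hi hni]
  split_ifs with hi1
  · exact one_ne_zero
  · exact hb i (by grind) (by grind)

/-- Let `Q₀(z) = z^{n₁} + b₂z^{n₂} + ⋯ + b_r z^{n_r} + b_{r+1}` with
`n₁ > n₂ > ⋯ > n_r > 0`, `b_i ≠ 0` for `i = 2, …, r+1`, and `gcd(n₁, …, n_r) = 1`.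
Let `β₂ ≥ 1` and `μ ∈ ℂ`.  If `Q₀(μ^{β₂} z^{β₂}) = Q₀(z^{β₂})` for all `z`, then
`μ^{β₂} = 1`. -/
theorem root_of_unity_of_coeff_comparison (r : ℕ) (hr : 1 ≤ r) (n : ℕ → ℕ) (b : ℕ → ℂ)
    (hdec : ∀ i j : ℕ, 1 ≤ i → i < j → j ≤ r → n j < n i)
    (hpos : 0 < n r)
    (hb : ∀ i : ℕ, 2 ≤ i → i ≤ r + 1 → b i ≠ 0)
    (hgcd : (Finset.Icc 1 r).gcd n = 1)
    (Q₀ : Polynomial ℂ)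
    (hQ₀ : Q₀ = X ^ (n 1) + ∑ i ∈ Finset.Icc 2 r, C (b i) * X ^ (n i) + C (b (r + 1)))
    (β₂ : ℕ) (hβ₂ : 1 ≤ β₂) (μ : ℂ)
    (heq : ∀ z : ℂ, Q₀.eval (μ ^ β₂ * z ^ β₂) = Q₀.eval (z ^ β₂)) :
    μ ^ β₂ = 1 :=
  root_of_unity_of_coeff_comparison_general r n b hdec hb hgcd Q₀ hQ₀ β₂ μ heq

end
end
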